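/- Let M be a faithful module over a commutative ring R and let S = R − Zd(M). Then M is a regular fusible R-module if and only if S⁻¹M is a fusible S⁻¹R-module, if and only if S⁻¹M is a regular fusible S⁻¹R-module. -/

import Mathlib

/-- `m` is a torsion element of the `R`-module `M`. -/
def IsTorsionElt (R M : Type*) [CommRing R] [AddCommGroup M] [Module R M] (m : M) : Prop :=
  ∃ r : R, r ≠ 0 ∧ r • m = 0

/-- `m` is a torsion-free element of the `R`-module `M` (`ann_R(m) = 0`). -/
def IsTorsionFreeElt (R M : Type*) [CommRing R] [AddCommGroup M] [Module R M] (m : M) : Prop :=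
  ∀ r : R, r • m = 0 → r = 0

/-- `r ∈ Zd(M)`: `r` is a zero divisor of the `R`-module `M`. -/
def IsZdElt (R M : Type*) [CommRing R] [AddCommGroup M] [Module R M] (r : R) : Prop :=
  ∃ m : M, m ≠ 0 ∧ r • m = 0

/-- `m` is fusible: it is the sum of a torsion and a torsion-free element. -/
def FusibleElt (R M : Type*) [CommRing R] [AddCommGroup M] [Module R M] (m : M) : Prop :=
  ∃ x y : M, IsTorsionElt R M x ∧ IsTorsionFreeElt R M y ∧ m = x + y

/-- `M` is a fusible `R`-module. -/
def FusibleModule (R M : Type*) [CommRing R] [AddCommGroup M] [Module R M] : Prop :=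
  ∀ m : M, m ≠ 0 → FusibleElt R M m

/-- `M` is a regular fusible `R`-module. -/
def RegularFusibleModule (R M : Type*) [CommRing R] [AddCommGroup M] [Module R M] : Prop :=
  ∀ m : M, m ≠ 0 → ∃ r : R, ¬ IsZdElt R M r ∧ FusibleElt R M (r • m)

/-!
Because `S` is exactly the set of `M`-regular elements and consists of non-zero-divisors of `R`,
the map `M → S⁻¹M` is injective, an element of `S⁻¹M` is torsion (torsion-free) over `S⁻¹R` iff
it is so over `R`, and every element of `S⁻¹M` has an `S`-multiple coming from `M`. Clearing
denominators therefore turns a decomposition `r • m = x + y` in `M` into one of `m / 1` in `S⁻¹M`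
and back. Every `S⁻¹M`-regular element of `S⁻¹R` is a unit, and fusibility is invariant under
units, so for `S⁻¹M` regular fusibility is the same as fusibility.
-/

open nonZeroDivisors

section Module

variable {R M N : Type*} [CommRing R] [AddCommGroup M] [Module R M] [AddCommGroup N] [Module R N]

theorem IsTorsionElt.smul {x : M} (hx : IsTorsionElt R M x) (r : R) :
    IsTorsionElt R M (r • x) := by
  obtain ⟨a, ha, hax⟩ := hx
  exact ⟨a, ha, by rw [smul_comm, hax, smul_zero]⟩

theorem IsTorsionFreeElt.smul {y : M} (hy : IsTorsionFreeElt R M y) {r : R} (hr : r ∈ R⁰) :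
    IsTorsionFreeElt R M (r • y) :=
  fun c hc => mem_nonZeroDivisors_iff_right.mp hr c (hy _ (by rwa [mul_smul]))

theorem FusibleElt.smul {m : M} (hm : FusibleElt R M m) {r : R} (hr : r ∈ R⁰) :
    FusibleElt R M (r • m) := by
  obtain ⟨x, y, hx, hy, rfl⟩ := hm
  exact ⟨r • x, r • y, hx.smul r, hy.smul hr, smul_add r x y⟩

theorem IsUnit.fusibleElt_smul_iff {u : R} (hu : IsUnit u) {m : M} :
    FusibleElt R M (u • m) ↔ FusibleElt R M m := by
  refine ⟨fun h => ?_, fun h => h.smul hu.mem_nonZeroDivisors⟩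
  obtain ⟨u, rfl⟩ := hu
  simpa [← mul_smul] using h.smul (u⁻¹).isUnit.mem_nonZeroDivisors

theorem isSMulRegular_of_not_isZdElt {r : R} (hr : ¬ IsZdElt R M r) : IsSMulRegular M r :=
  isSMulRegular_iff_right_eq_zero_of_smul.mpr fun m hm => by
    by_contra h
    exact hr ⟨m, h, hm⟩

theorem mem_nonZeroDivisors_of_not_isZdElt (hfaith : ∀ r : R, (∀ m : M, r • m = 0) → r = 0)
    {r : R} (hr : ¬ IsZdElt R M r) : r ∈ R⁰ :=
  mem_nonZeroDivisors_iff_right.mpr fun a ha =>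
    hfaith a fun m => (isSMulRegular_of_not_isZdElt hr).right_eq_zero_of_smul <| by
      rw [← mul_smul, mul_comm, ha, zero_smul]

variable {f : M →ₗ[R] N}

theorem isTorsionElt_map_iff (hf : Function.Injective f) {x : M} :
    IsTorsionElt R N (f x) ↔ IsTorsionElt R M x := by
  simp only [IsTorsionElt, ← map_smul, map_eq_zero_iff f hf]

theorem isTorsionFreeElt_map_iff (hf : Function.Injective f) {y : M} :
    IsTorsionFreeElt R N (f y) ↔ IsTorsionFreeElt R M y := by
  simp only [IsTorsionFreeElt, ← map_smul, map_eq_zero_iff f hf]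

theorem FusibleElt.map (hf : Function.Injective f) {m : M} (hm : FusibleElt R M m) :
    FusibleElt R N (f m) := by
  obtain ⟨x, y, hx, hy, rfl⟩ := hm
  exact ⟨f x, f y, (isTorsionElt_map_iff hf).mpr hx, (isTorsionFreeElt_map_iff hf).mpr hy,
    map_add f x y⟩

end Module

section FusibleModule

variable {R M : Type*} [CommRing R] [AddCommGroup M] [Module R M]

theorem FusibleModule.regularFusibleModule (h : FusibleModule R M) : RegularFusibleModule R M :=
  fun m hm => ⟨1, fun ⟨n, hn, h1n⟩ => hn (by rwa [one_smul] at h1n), by rw [one_smul]; exact h m hm⟩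

theorem regularFusibleModule_iff_fusibleModule (hunit : ∀ r : R, ¬ IsZdElt R M r → IsUnit r) :
    RegularFusibleModule R M ↔ FusibleModule R M := by
  refine ⟨fun h m hm => ?_, FusibleModule.regularFusibleModule⟩
  obtain ⟨r, hr, hrm⟩ := h m hm
  exact (hunit r hr).fusibleElt_smul_iff.mp hrm

end FusibleModule

section Localization

variable {R A N : Type*} [CommRing R] [CommRing A] [Algebra R A]
  [AddCommGroup N] [Module R N] [Module A N] [IsScalarTower R A N]

theorem IsLocalization.exists_eq_isUnit_mul_algebraMap (S : Submonoid R) [IsLocalization S A]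
    (ρ : A) : ∃ a : R, ∃ u : A, IsUnit u ∧ ρ = u * algebraMap R A a := by
  obtain ⟨⟨a, s⟩, h⟩ := IsLocalization.surj S ρ
  let v := (IsLocalization.map_units A s).unit
  refine ⟨a, ↑v⁻¹, v⁻¹.isUnit, ?_⟩
  rw [Units.eq_inv_mul_iff_mul_eq, ← h, mul_comm, IsUnit.unit_spec]

theorem isTorsionElt_localization_iff (S : Submonoid R) [IsLocalization S A] (hS₀ : S ≤ R⁰)
    {X : N} : IsTorsionElt A N X ↔ IsTorsionElt R N X := by
  constructor
  · rintro ⟨ρ, hρ, hρX⟩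
    obtain ⟨a, u, hu, rfl⟩ := IsLocalization.exists_eq_isUnit_mul_algebraMap S ρ
    refine ⟨a, fun ha => hρ (by rw [ha, map_zero, mul_zero]), ?_⟩
    rwa [mul_smul, hu.smul_eq_zero, algebraMap_smul] at hρX
  · rintro ⟨a, ha, haX⟩
    exact ⟨algebraMap R A a, (map_ne_zero_iff _ (IsLocalization.injective A hS₀)).mpr ha,
      by rw [algebraMap_smul, haX]⟩

theorem isTorsionFreeElt_localization_iff (S : Submonoid R) [IsLocalization S A] (hS₀ : S ≤ R⁰)
    {X : N} : IsTorsionFreeElt A N X ↔ IsTorsionFreeElt R N X := by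
  constructor
  · intro h a haX
    refine IsLocalization.injective A hS₀ ?_
    rw [map_zero]
    exact h _ (by rwa [algebraMap_smul])
  · intro h ρ hρX
    obtain ⟨a, u, hu, rfl⟩ := IsLocalization.exists_eq_isUnit_mul_algebraMap S ρ
    rw [mul_smul, hu.smul_eq_zero, algebraMap_smul] at hρX
    rw [h a hρX, map_zero, mul_zero]

theorem fusibleElt_localization_iff (S : Submonoid R) [IsLocalization S A] (hS₀ : S ≤ R⁰)
    {X : N} : FusibleElt A N X ↔ FusibleElt R N X := by
  simp only [FusibleElt, isTorsionElt_localization_iff S hS₀,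
    isTorsionFreeElt_localization_iff S hS₀]

end Localization

section LocalizedModule

variable {R A M N : Type*} [CommRing R] [CommRing A] [Algebra R A]
  [AddCommGroup M] [Module R M] [AddCommGroup N] [Module R N] [Module A N] [IsScalarTower R A N]
  {S : Submonoid R}

theorem IsLocalizedModule.injective_of_not_isZdElt (f : M →ₗ[R] N) [IsLocalizedModule S f]
    (hS : ∀ s ∈ S, ¬ IsZdElt R M s) : Function.Injective f :=
  (IsLocalizedModule.injective_iff_isRegular S f).mpr fun s =>
    isSMulRegular_of_not_isZdElt (hS s s.2)

theorem isUnit_of_not_isZdElt_of_isLocalizedModule [IsLocalization S A] (f : M →ₗ[R] N)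
    [IsLocalizedModule S f] (hS : ∀ r : R, r ∈ S ↔ ¬ IsZdElt R M r) {ρ : A}
    (hρ : ¬ IsZdElt A N ρ) : IsUnit ρ := by
  have hf := IsLocalizedModule.injective_of_not_isZdElt f fun s hs => (hS s).mp hs
  obtain ⟨a, u, hu, rfl⟩ := IsLocalization.exists_eq_isUnit_mul_algebraMap S ρ
  have ha : a ∈ S := (hS a).mpr fun ⟨m, hm, ham⟩ =>
    hρ ⟨f m, (map_ne_zero_iff f hf).mpr hm, by rw [mul_smul, algebraMap_smul, ← map_smul, ham,
      map_zero, smul_zero]⟩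
  exact hu.mul (IsLocalization.map_units A ⟨a, ha⟩)

theorem RegularFusibleModule.fusibleModule_of_isLocalizedModule [IsLocalization S A]
    (f : M →ₗ[R] N) [IsLocalizedModule S f] (hS : ∀ r : R, r ∈ S ↔ ¬ IsZdElt R M r)
    (hS₀ : S ≤ R⁰) (h : RegularFusibleModule R M) : FusibleModule A N := by
  have hf := IsLocalizedModule.injective_of_not_isZdElt f fun s hs => (hS s).mp hs
  intro X hX
  obtain ⟨⟨m, s⟩, hsX⟩ := IsLocalizedModule.surj S f X
  have hm : m ≠ 0 := by
    rintro rfl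
    rw [map_zero, Submonoid.smul_def, ← algebraMap_smul A,
      (IsLocalization.map_units A s).smul_eq_zero] at hsX
    exact hX hsX
  obtain ⟨r, hr, hrm⟩ := h m hm
  have hrs : r * s ∈ S := S.mul_mem ((hS r).mpr hr) s.2
  rw [← (IsLocalization.map_units A ⟨r * s, hrs⟩).fusibleElt_smul_iff,
    fusibleElt_localization_iff S hS₀, algebraMap_smul, mul_smul, ← Submonoid.smul_def, hsX,
    ← map_smul]
  exact hrm.map hf

theorem FusibleModule.regularFusibleModule_of_isLocalizedModule [IsLocalization S A]
    (f : M →ₗ[R] N) [IsLocalizedModule S f] (hS : ∀ r : R, r ∈ S ↔ ¬ IsZdElt R M r)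
    (hS₀ : S ≤ R⁰) (h : FusibleModule A N) : RegularFusibleModule R M := by
  have hf := IsLocalizedModule.injective_of_not_isZdElt f fun s hs => (hS s).mp hs
  intro m hm
  obtain ⟨X, Y, hX, hY, hXY⟩ :=
    (fusibleElt_localization_iff S hS₀).mp (h (f m) ((map_ne_zero_iff f hf).mpr hm))
  obtain ⟨⟨x, s⟩, hsX⟩ := IsLocalizedModule.surj S f X
  obtain ⟨⟨y, t⟩, htY⟩ := IsLocalizedModule.surj S f Y
  have hx : IsTorsionElt R M x := (isTorsionElt_map_iff hf).mp (hsX ▸ hX.smul (s : R))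
  have hy : IsTorsionFreeElt R M y := (isTorsionFreeElt_map_iff hf).mp (htY ▸ hY.smul (hS₀ t.2))
  refine ⟨s * t, (hS _).mp (S.mul_mem s.2 t.2), (t : R) • x, (s : R) • y, hx.smul _,
    hy.smul (hS₀ s.2), hf ?_⟩
  rw [Submonoid.smul_def] at hsX htY
  rw [map_add, map_smul, map_smul, map_smul, ← hsX, ← htY, hXY]
  module

end LocalizedModule

/-- For a faithful module `M` over a commutative ring `R` and `S = R − Zd(M)`:
`M` is regular fusible iff `S⁻¹M` is a fusible `S⁻¹R`-module iff `S⁻¹M` is a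
regular fusible `S⁻¹R`-module. -/
theorem regularFusible_iff_totalQuotient_fusible (R M : Type*) [CommRing R] [AddCommGroup M]
    [Module R M] (hfaith : ∀ r : R, (∀ m : M, r • m = 0) → r = 0)
    (S : Submonoid R) (hS : ∀ r : R, r ∈ S ↔ ¬ IsZdElt R M r) :
    (RegularFusibleModule R M ↔ FusibleModule (Localization S) (LocalizedModule S M)) ∧
    (FusibleModule (Localization S) (LocalizedModule S M) ↔
      RegularFusibleModule (Localization S) (LocalizedModule S M)) := by
  let f := LocalizedModule.mkLinearMap S M
  have hS₀ : S ≤ R⁰ := fun r hr => mem_nonZeroDivisors_of_not_isZdElt hfaith ((hS r).mp hr)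
  refine ⟨⟨RegularFusibleModule.fusibleModule_of_isLocalizedModule f hS hS₀,
    FusibleModule.regularFusibleModule_of_isLocalizedModule f hS hS₀⟩, ?_⟩
  exact (regularFusibleModule_iff_fusibleModule
    fun _ => isUnit_of_not_isZdElt_of_isLocalizedModule f hS).symm
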